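/- arXiv:1403.1494 — 2 statements merged into one kernel-verified Lean document; each statement's English description precedes it below -/
import Mathlib

section
/- For any tree T on n vertices, the performance measure satisfies ρ_ss(T) = W(T)/(2n), where W(T) is the Wiener index (sum of distances between all unordered pairs of vertices). -/
open Matrix SimpleGraph Finset

/-- Performance measure: half the sum of reciprocals of the Laplacian eigenvalues
(the zero eigenvalue contributes `0⁻¹ = 0`). -/
noncomputable def rho {n : ℕ} (G : SimpleGraph (Fin n)) [DecidableRel G.Adj] : ℝ :=
  (1/2) * ∑ i, ((G.posSemidef_lapMatrix ℝ).1.eigenvalues i)⁻¹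

/-- Wiener index: sum of distances over all unordered pairs of vertices. -/
noncomputable def wiener {n : ℕ} (G : SimpleGraph (Fin n)) : ℝ :=
  (1/2) * ∑ i, ∑ j, (G.dist i j : ℝ)

/-!
On a tree, every vertex `u ≠ x` has exactly one neighbour closer to `x`, which yields the
Graham–Lovász identity `L D = (2 - deg) 𝟙ᵀ - 2 I` for the Laplacian `L` and the distance
matrix `D`. Hence `H = -½ D P`, with `P = I - 𝟙𝟙ᵀ/n` the centering matrix, vanishes on
`ker L = ℝ 𝟙` and satisfies `L H v = v` for `v ⊥ 𝟙`. Testing `H` against an orthonormal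
eigenbasis of `L` shows `tr H = ∑ λᵢ⁻¹` (with `0⁻¹ = 0`), while
`tr H = -½ (tr D - 𝟙ᵀ D 𝟙 / n) = (1/2n) ∑ᵢⱼ d(i,j)`.
-/

namespace Matrix

variable {ι : Type*} [Fintype ι]

lemma IsSymm.mulVec_dotProduct {R : Type*} [CommSemiring R] {A : Matrix ι ι R} (hA : A.IsSymm)
    (v w : ι → R) : A *ᵥ v ⬝ᵥ w = v ⬝ᵥ A *ᵥ w := by
  rw [dotProduct_mulVec, ← mulVec_transpose, hA.eq, dotProduct_comm]

variable [DecidableEq ι]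

lemma IsHermitian.trace_eq_sum_dotProduct_eigenvectorBasis {A : Matrix ι ι ℝ}
    (hA : A.IsHermitian) (H : Matrix ι ι ℝ) :
    H.trace = ∑ i, ⇑(hA.eigenvectorBasis i) ⬝ᵥ H *ᵥ ⇑(hA.eigenvectorBasis i) := by
  set U : Matrix ι ι ℝ := ↑hA.eigenvectorUnitary
  have hU : U * star U = 1 := Unitary.coe_mul_star_self _
  have hconj : H.trace = (star U * (H * U)).trace := by
    rw [trace_mul_comm, Matrix.mul_assoc, hU, Matrix.mul_one]
  rw [hconj, trace]
  refine Finset.sum_congr rfl fun i _ => ?_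
  simp [U, mul_apply, mulVec, dotProduct, Finset.mul_sum, mul_left_comm]

lemma IsHermitian.dotProduct_eigenvectorBasis_self {A : Matrix ι ι ℝ} (hA : A.IsHermitian)
    (i : ι) : ⇑(hA.eigenvectorBasis i) ⬝ᵥ ⇑(hA.eigenvectorBasis i) = 1 := by
  have h := orthonormal_iff_ite.mp hA.eigenvectorBasis.orthonormal i i
  rw [if_pos rfl, EuclideanSpace.inner_eq_star_dotProduct] at h
  simpa using h

/-- Under these hypotheses `⟪u, H u⟫ = μ⁻¹` for every unit eigenvector `u` of `A` with
eigenvalue `μ`, also for `μ = 0` since `0⁻¹ = 0`. -/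
theorem IsHermitian.sum_inv_eigenvalues_eq_trace {A H : Matrix ι ι ℝ} (hA : A.IsHermitian)
    (hker : ∀ v, A *ᵥ v = 0 → H *ᵥ v = 0)
    (hrange : ∀ v, (∀ w, A *ᵥ w = 0 → v ⬝ᵥ w = 0) → A *ᵥ H *ᵥ v = v) :
    ∑ i, (hA.eigenvalues i)⁻¹ = H.trace := by
  have hsymm : A.IsSymm := by
    rw [IsSymm, ← conjTranspose_eq_transpose_of_trivial]
    exact hA
  rw [hA.trace_eq_sum_dotProduct_eigenvectorBasis]
  refine Finset.sum_congr rfl fun i _ => ?_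
  set u := ⇑(hA.eigenvectorBasis i)
  set μ := hA.eigenvalues i
  have hu : A *ᵥ u = μ • u := hA.mulVec_eigenvectorBasis i
  by_cases hμ : μ = 0
  · rw [hμ, _root_.inv_zero, hker u (by rw [hu, hμ, zero_smul]), dotProduct_zero]
  · have horth : ∀ w, A *ᵥ w = 0 → u ⬝ᵥ w = 0 := fun w hw => by
      have h := hsymm.mulVec_dotProduct u w
      rw [hu, hw, dotProduct_zero, smul_dotProduct, smul_eq_mul] at h
      exact (mul_eq_zero.mp h).resolve_left hμ
    have h := hsymm.mulVec_dotProduct u (H *ᵥ u)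
    rw [hu, hrange u horth, hA.dotProduct_eigenvectorBasis_self, smul_dotProduct,
      smul_eq_mul] at h
    exact (eq_inv_of_mul_eq_one_right h).symm

noncomputable def centeringMatrix (ι : Type*) [Fintype ι] [DecidableEq ι] : Matrix ι ι ℝ :=
  1 - (Fintype.card ι : ℝ)⁻¹ • vecMulVec 1 1

lemma centeringMatrix_mulVec (v : ι → ℝ) :
    centeringMatrix ι *ᵥ v = v - ((Fintype.card ι : ℝ)⁻¹ * (1 ⬝ᵥ v)) • 1 := by
  rw [centeringMatrix, sub_mulVec, one_mulVec, smul_mulVec, vecMulVec_mulVec, op_smul_eq_smul,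
    smul_smul]

lemma centeringMatrix_mulVec_of_one_dotProduct_eq_zero {v : ι → ℝ} (hv : 1 ⬝ᵥ v = 0) :
    centeringMatrix ι *ᵥ v = v := by
  rw [centeringMatrix_mulVec, hv, mul_zero, zero_smul, sub_zero]

lemma centeringMatrix_mulVec_const [Nonempty ι] (c : ℝ) :
    centeringMatrix ι *ᵥ (fun _ => c) = 0 := by
  have hcard : (Fintype.card ι : ℝ) ≠ 0 := Nat.cast_ne_zero.mpr Fintype.card_ne_zero
  ext i
  simp [centeringMatrix_mulVec, one_dotProduct, hcard]

lemma trace_mul_centeringMatrix (D : Matrix ι ι ℝ) :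
    (D * centeringMatrix ι).trace = D.trace - (Fintype.card ι : ℝ)⁻¹ * ∑ i, ∑ j, D i j := by
  rw [centeringMatrix, Matrix.mul_sub, Matrix.mul_one, Matrix.mul_smul, mul_vecMulVec, trace_sub,
    trace_smul, trace_vecMulVec, smul_eq_mul, dotProduct_one]
  simp only [mulVec, dotProduct, Pi.one_apply, mul_one]

end Matrix

namespace SimpleGraph

variable {V : Type*} {G : SimpleGraph V}

lemma Reachable.exists_adj_dist_eq_add_one {u x : V} (h : G.Reachable u x) (hne : u ≠ x) :
    ∃ v, G.Adj u v ∧ G.dist x u = G.dist x v + 1 := by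
  obtain ⟨p, hp⟩ := h.exists_walk_length_eq_dist
  cases p with
  | nil => exact absurd rfl hne
  | @cons _ v _ hadj q =>
    obtain ⟨q', hq'⟩ := Reachable.exists_walk_length_eq_dist ⟨q⟩
    have hvx : G.dist v x ≤ q.length := dist_le q
    have hux : G.dist u x ≤ (Walk.cons hadj q').length := dist_le _
    rw [Walk.length_cons] at hp hux
    exact ⟨v, hadj, by rw [dist_comm (u := x), dist_comm (u := x)]; omega⟩

lemma IsTree.eq_of_adj_of_dist_eq_add_one (hG : G.IsTree) {u v w x : V}
    (hv : G.Adj u v) (hw : G.Adj u w)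
    (hvx : G.dist x u = G.dist x v + 1) (hwx : G.dist x u = G.dist x w + 1) : v = w := by
  have path_through : ∀ v, G.Adj u v → G.dist x u = G.dist x v + 1 →
      ∃ p : G.Walk u x, p.IsPath ∧ p.snd = v := fun v hv hvx => by
    obtain ⟨q, hq⟩ := (hG.connected v x).exists_walk_length_eq_dist
    refine ⟨.cons hv q, Walk.isPath_of_length_eq_dist _ ?_, Walk.snd_cons q hv⟩
    rw [Walk.length_cons, hq, dist_comm (u := u), hvx, dist_comm]
  obtain ⟨p, hp, rfl⟩ := path_through v hv hvx
  obtain ⟨q, hq, rfl⟩ := path_through w hw hwx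
  rw [(hG.existsUnique_path u x).unique hp hq]

variable [Fintype V] [DecidableRel G.Adj]

lemma sum_dist_neighborFinset_self (x : V) :
    ∑ v ∈ G.neighborFinset x, G.dist x v = G.degree x := by
  rw [Finset.sum_congr rfl fun v hv => dist_eq_one_iff_adj.mpr ((mem_neighborFinset G x v).mp hv),
    Finset.sum_const, smul_eq_mul, mul_one, card_neighborFinset_eq_degree]

lemma IsTree.sum_dist_neighborFinset_add_two (hG : G.IsTree) {u x : V} (hne : u ≠ x) :
    ∑ v ∈ G.neighborFinset u, G.dist x v + 2 = G.degree u * (G.dist x u + 1) := by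
  classical
  obtain ⟨c, hc, hcx⟩ := (hG.connected u x).exists_adj_dist_eq_add_one hne
  have hc' : c ∈ G.neighborFinset u := (mem_neighborFinset G u c).mpr hc
  have hfar : ∀ v ∈ (G.neighborFinset u).erase c, G.dist x v = G.dist x u + 1 := by
    intro v hv
    rw [Finset.mem_erase, mem_neighborFinset] at hv
    refine (hG.dist_eq_dist_add_one_of_adj x hv.2).resolve_left fun hvx => ?_
    exact hv.1 (hG.eq_of_adj_of_dist_eq_add_one hv.2 hc hvx hcx)
  have hdeg : (G.neighborFinset u).card = ((G.neighborFinset u).erase c).card + 1 :=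
    (Finset.card_erase_add_one hc').symm
  rw [← Finset.add_sum_erase _ _ hc', Finset.sum_congr rfl hfar, Finset.sum_const, smul_eq_mul,
    ← card_neighborFinset_eq_degree, hdeg, hcx]
  ring

noncomputable def distMatrix (G : SimpleGraph V) : Matrix V V ℝ := .of fun u v => G.dist u v

variable [DecidableEq V]

theorem IsTree.lapMatrix_mul_distMatrix (hG : G.IsTree) :
    G.lapMatrix ℝ * G.distMatrix = vecMulVec (fun u => 2 - (G.degree u : ℝ)) 1 - 2 := by
  ext u x
  have hcol : (G.lapMatrix ℝ * G.distMatrix) u x =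
      (G.lapMatrix ℝ *ᵥ fun v => (G.dist x v : ℝ)) u := by
    simp [distMatrix, mul_apply, mulVec, dotProduct, dist_comm]
  rw [hcol, lapMatrix_mulVec_apply, Matrix.sub_apply, vecMulVec_apply, ofNat_apply]
  by_cases hux : u = x
  · subst hux
    simp [← Nat.cast_sum, sum_dist_neighborFinset_self]
  · have h := congrArg (fun m : ℕ => (m : ℝ)) (hG.sum_dist_neighborFinset_add_two hux)
    push_cast at h
    simp only [hux, if_false, Pi.one_apply, mul_one, Nat.cast_zero]
    linarith

lemma IsTree.lapMatrix_mulVec_distMatrix_mulVec (hG : G.IsTree) {v : V → ℝ}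
    (hv : 1 ⬝ᵥ v = 0) : G.lapMatrix ℝ *ᵥ G.distMatrix *ᵥ v = (-2 : ℝ) • v := by
  rw [mulVec_mulVec, hG.lapMatrix_mul_distMatrix, sub_mulVec, vecMulVec_mulVec, hv]
  simp

omit [DecidableRel G.Adj] in
lemma trace_distMatrix_mul_centeringMatrix :
    (G.distMatrix * centeringMatrix V).trace =
      -(Fintype.card V : ℝ)⁻¹ * ∑ u, ∑ v, (G.dist u v : ℝ) := by
  rw [trace_mul_centeringMatrix]
  simp [distMatrix, trace]

theorem IsTree.sum_inv_eigenvalues_lapMatrix (hG : G.IsTree) :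
    ∑ i, ((G.posSemidef_lapMatrix ℝ).1.eigenvalues i)⁻¹ =
      (Fintype.card V : ℝ)⁻¹ / 2 * ∑ u, ∑ v, (G.dist u v : ℝ) := by
  have : Nonempty V := hG.connected.nonempty
  rw [(G.posSemidef_lapMatrix ℝ).1.sum_inv_eigenvalues_eq_trace
    (H := -(1 / 2 : ℝ) • (G.distMatrix * centeringMatrix V)), trace_smul,
    trace_distMatrix_mul_centeringMatrix, smul_eq_mul]
  · ring
  · intro v hv
    obtain ⟨c, rfl⟩ : ∃ c, v = fun _ => c :=
      ⟨v (Classical.arbitrary V), funext fun u => (lapMatrix_mulVec_eq_zero_iff_forall_reachable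
        G).mp hv u _ (hG.connected u _)⟩
    rw [smul_mulVec, ← mulVec_mulVec, centeringMatrix_mulVec_const, mulVec_zero, smul_zero]
  · intro v hv
    have hsum : 1 ⬝ᵥ v = 0 := by
      rw [dotProduct_comm]
      exact hv _ (lapMatrix_mulVec_const_eq_zero G)
    rw [smul_mulVec, ← mulVec_mulVec, centeringMatrix_mulVec_of_one_dotProduct_eq_zero hsum,
      mulVec_smul, hG.lapMatrix_mulVec_distMatrix_mulVec hsum, smul_smul]
    norm_num

end SimpleGraph

/-- For any tree `T` on `n` vertices, `ρ_ss(T) = W(T)/(2n)`. -/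
theorem stmt4 {n : ℕ} (T : SimpleGraph (Fin n)) [DecidableRel T.Adj] (hT : T.IsTree) :
    rho T = wiener T / (2 * n) := by
  rw [rho, wiener, hT.sum_inv_eigenvalues_lapMatrix, Fintype.card_fin]
  ring
end

section
/- Let G be a connected graph whose edge set carries two weightings: susceptance weights b_e > 0 and conductance weights g_e = α_e b_e with α_e > 0. Then Tr(L_{G_b}^† L_{G_g}) = ∑_{e∈E} ν_e α_e where ν_e = r_e^{(G_b)} b_e and r_e^{(G_b)} is the effective resistance of edge e in the b-weighted graph; moreover ∑_{e∈E} ν_e = n - 1, so α_min (n-1) ≤ Tr(L_{G_b}^† L_{G_g}) ≤ α_max (n-1). -/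
open Matrix SimpleGraph Finset

/-- Weighted Laplacian of a graph with edge weights `w`. -/
noncomputable def glap {n : ℕ} (G : SimpleGraph (Fin n)) [DecidableRel G.Adj]
    (w : Sym2 (Fin n) → ℝ) : Matrix (Fin n) (Fin n) ℝ :=
  Matrix.of fun i j =>
    if i = j then ∑ k, (if G.Adj i k then w s(i, k) else 0)
    else if G.Adj i j then -w s(i, j) else 0

lemma glap_isHermitian {n : ℕ} (G : SimpleGraph (Fin n)) [DecidableRel G.Adj]
    (w : Sym2 (Fin n) → ℝ) : (glap G w).IsHermitian := by
  rw [Matrix.IsHermitian, conjTranspose_eq_transpose_of_trivial]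
  ext i j
  simp only [glap, Matrix.transpose_apply, Matrix.of_apply]
  by_cases h : i = j
  · subst h; simp
  · have h' : ¬ j = i := fun hh => h hh.symm
    rw [if_neg h', if_neg h]
    by_cases ha : G.Adj i j
    · rw [if_pos ha, if_pos (G.adj_comm i j |>.mp ha), Sym2.eq_swap]
    · rw [if_neg ha, if_neg (fun hh => ha ((G.adj_comm i j).mpr hh))]

/-- Eigenvalues of the weighted Laplacian. -/
noncomputable def wEig {n : ℕ} (G : SimpleGraph (Fin n)) [DecidableRel G.Adj]
    (w : Sym2 (Fin n) → ℝ) : Fin n → ℝ :=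
  (glap_isHermitian G w).eigenvalues

/-- Performance measure of a weighted graph. -/
noncomputable def wRho {n : ℕ} (G : SimpleGraph (Fin n)) [DecidableRel G.Adj]
    (w : Sym2 (Fin n) → ℝ) : ℝ :=
  (1/2) * ∑ i, (wEig G w i)⁻¹

/-- Effective-resistance quadratic form of an unordered pair. -/
noncomputable def effR {n : ℕ} (Lp : Matrix (Fin n) (Fin n) ℝ) (e : Sym2 (Fin n)) : ℝ :=
  Sym2.lift ⟨fun i j => Lp i i + Lp j j - Lp i j - Lp j i, fun i j => by ring⟩ e

/-! With `x_e = e_u - e_v`, the Laplacian is `L_w = ∑_e w_e x_e x_eᵀ`, so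
`Tr(X L_w) = ∑_e w_e x_eᵀ X x_e` for every matrix `X`. The identity `L X L = L` makes `X L`
idempotent with the rank of `L`, which is `n - 1` because the kernel of `L` of a connected graph
consists of the constants; hence `Tr(X L) = n - 1`. Each `x_e` sums to zero, so it lies in
`range L = 𝟙ᗮ`, say `x_e = L z`, and then `x_eᵀ X x_e = zᵀ L X L z = zᵀ L z ≥ 0`: the weights `ν_e`
are nonnegative and the bounds follow. -/

namespace SimpleGraph

variable {V : Type*} [Fintype V] (G : SimpleGraph V) [DecidableRel G.Adj]
  {M : Type*} [AddCommMonoid M]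

lemma sum_dart_eq_sum_adj (f : V → V → M) :
    ∑ d : G.Dart, f d.fst d.snd = ∑ i, ∑ j, if G.Adj i j then f i j else 0 := by
  rw [← sum_product' (f := fun i j => if G.Adj i j then f i j else 0), ← sum_filter]
  exact sum_bij' (fun d _ => d.toProd) (fun p hp => ⟨p, (mem_filter.mp hp).2⟩)
    (fun d _ => mem_filter.mpr ⟨mem_univ _, d.adj⟩) (fun _ _ => mem_univ _)
    (fun _ _ => rfl) (fun _ _ => rfl) (fun _ _ => rfl)

lemma sum_adj_swap (f : V → V → M) :
    ∑ i, ∑ j, (if G.Adj i j then f i j else 0) = ∑ i, ∑ j, if G.Adj i j then f j i else 0 := by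
  rw [sum_comm]
  exact sum_congr rfl fun i _ => sum_congr rfl fun j _ => by simp only [G.adj_comm j i]

lemma sum_dart_eq_sum_edgeFinset [DecidableEq V] (f : V → V → M) (F : Sym2 V → M)
    (hF : ∀ i j, G.Adj i j → f i j + f j i = F s(i, j)) :
    ∑ d : G.Dart, f d.fst d.snd = ∑ e ∈ G.edgeFinset, F e := by
  rw [← sum_fiberwise_of_maps_to (g := Dart.edge) (t := G.edgeFinset)
    (fun d _ => G.mem_edgeFinset.mpr d.edge_mem)]
  refine sum_congr rfl fun e he => ?_
  induction e with
  | _ u v =>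
    let d : G.Dart := ⟨(u, v), G.mem_edgeFinset.mp he⟩
    rw [show (univ.filter fun d' : G.Dart => d'.edge = s(u, v)) = {d, d.symm} from
      d.edge_fiber, sum_pair d.symm_ne.symm]
    exact hF u v d.adj

lemma sum_adj_eq_sum_edgeFinset [DecidableEq V] (f : V → V → M) (F : Sym2 V → M)
    (hF : ∀ i j, G.Adj i j → f i j + f j i = F s(i, j)) :
    ∑ i, ∑ j, (if G.Adj i j then f i j else 0) = ∑ e ∈ G.edgeFinset, F e := by
  rw [← sum_dart_eq_sum_adj, sum_dart_eq_sum_edgeFinset G f F hF]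

end SimpleGraph

namespace Matrix

variable {m : Type*} [Fintype m]

lemma isIdempotentElem_mul_of_mul_mul_eq {R : Type*} [Semiring R] {A X : Matrix m m R}
    (h : A * X * A = A) : IsIdempotentElem (X * A) := by
  rw [IsIdempotentElem, Matrix.mul_assoc, ← Matrix.mul_assoc A, h]

lemma rank_mul_eq_of_mul_mul_eq {R : Type*} [CommRing R] [StrongRankCondition R]
    {A X : Matrix m m R} (h : A * X * A = A) : (X * A).rank = A.rank :=
  le_antisymm (rank_mul_le_right X A) <| calc
    A.rank = (A * (X * A)).rank := by rw [← Matrix.mul_assoc, h]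
    _ ≤ (X * A).rank := rank_mul_le_right A (X * A)

lemma dotProduct_mulVec_mulVec_of_mul_mul_eq {R : Type*} [CommSemiring R]
    {A X : Matrix m m R} (hA : Aᵀ = A) (h : A * X * A = A) (z : m → R) :
    (A *ᵥ z) ⬝ᵥ (X *ᵥ (A *ᵥ z)) = z ⬝ᵥ (A *ᵥ z) := by
  have hAz : A *ᵥ z = z ᵥ* A := by rw [← vecMul_transpose, hA]
  nth_rw 1 [hAz]
  rw [← dotProduct_mulVec, mulVec_mulVec, mulVec_mulVec, h]

variable [DecidableEq m] {K : Type*} [Field K]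

lemma trace_eq_rank_of_isIdempotentElem {P : Matrix m m K} (hP : IsIdempotentElem P) :
    P.trace = P.rank := by
  have hP' : IsIdempotentElem P.mulVecLin := by
    rw [IsIdempotentElem, Module.End.mul_eq_comp, ← mulVecLin_mul, hP.eq]
  rw [← trace_toLin'_eq, toLin'_apply',
    ((LinearMap.isProj_range_iff_isIdempotentElem _).mpr hP').trace, rank]

end Matrix

namespace Finset

variable {ι R : Type*} [CommSemiring R] [LinearOrder R] [IsOrderedRing R] {s : Finset ι}
  (hs : s.Nonempty) (a ν : ι → R)

lemma inf'_mul_sum_le_sum_mul (hν : ∀ i ∈ s, 0 ≤ ν i) :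
    s.inf' hs a * ∑ i ∈ s, ν i ≤ ∑ i ∈ s, ν i * a i := by
  rw [mul_sum]
  exact sum_le_sum fun i hi => by
    rw [mul_comm]; exact mul_le_mul_of_nonneg_left (inf'_le a hi) (hν i hi)

lemma sum_mul_le_sup'_mul_sum (hν : ∀ i ∈ s, 0 ≤ ν i) :
    ∑ i ∈ s, ν i * a i ≤ s.sup' hs a * ∑ i ∈ s, ν i := by
  rw [mul_sum]
  exact sum_le_sum fun i hi => by
    rw [mul_comm (s.sup' hs a)]; exact mul_le_mul_of_nonneg_left (le_sup' a hi) (hν i hi)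

end Finset

lemma effR_mk {n : ℕ} (M : Matrix (Fin n) (Fin n) ℝ) (u v : Fin n) :
    effR M s(u, v) =
      (Pi.single u 1 - Pi.single v 1) ⬝ᵥ (M *ᵥ (Pi.single u 1 - Pi.single v 1)) := by
  simp [effR, dotProduct_sub, sub_dotProduct, mulVec_sub, single_dotProduct, mulVec_single]
  ring

section Laplacian

variable {n : ℕ} (G : SimpleGraph (Fin n)) [DecidableRel G.Adj] (w : Sym2 (Fin n) → ℝ)

lemma glap_transpose : (glap G w)ᵀ = glap G w := by
  rw [← conjTranspose_eq_transpose_of_trivial]; exact glap_isHermitian G w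

lemma glap_mulVec (x : Fin n → ℝ) (i : Fin n) :
    (glap G w *ᵥ x) i = ∑ j, if G.Adj i j then w s(i, j) * (x i - x j) else 0 := by
  have hentry : ∀ j, glap G w i j * x j =
      (if i = j then (∑ k, if G.Adj i k then w s(i, k) else 0) * x i else 0) +
        (if G.Adj i j then -w s(i, j) * x j else 0) := by
    intro j
    by_cases h : i = j
    · subst h; simp [glap]
    · simp [glap, h]
  rw [mulVec, dotProduct, sum_congr rfl fun j _ => hentry j, sum_add_distrib, sum_ite_eq,
    if_pos (mem_univ i), sum_mul, ← sum_add_distrib]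
  refine sum_congr rfl fun j _ => ?_
  split_ifs <;> ring

lemma trace_mul_glap (M : Matrix (Fin n) (Fin n) ℝ) :
    trace (M * glap G w) = ∑ e ∈ G.edgeFinset, w e * effR M e := by
  calc trace (M * glap G w) = ∑ i, (glap G w *ᵥ fun j => M j i) i := by
        rw [trace_mul_comm]; rfl
    _ = ∑ i, ∑ j, if G.Adj i j then w s(i, j) * (M i i - M j i) else 0 := by
        simp only [glap_mulVec]
    _ = _ := G.sum_adj_eq_sum_edgeFinset _ _ fun i j _ => by
        rw [effR, Sym2.lift_mk, show s(j, i) = s(i, j) from Sym2.eq_swap]; ring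

lemma two_mul_dotProduct_glap_mulVec (x : Fin n → ℝ) :
    2 * (x ⬝ᵥ (glap G w *ᵥ x)) =
      ∑ i, ∑ j, if G.Adj i j then w s(i, j) * (x i - x j) ^ 2 else 0 := by
  have hquad : x ⬝ᵥ (glap G w *ᵥ x) =
      ∑ i, ∑ j, if G.Adj i j then w s(i, j) * (x i * (x i - x j)) else 0 := by
    simp only [dotProduct, glap_mulVec, mul_sum, mul_ite, mul_zero]
    exact sum_congr rfl fun i _ => sum_congr rfl fun j _ => by split_ifs <;> ring
  rw [two_mul, hquad]
  conv_lhs => arg 2; rw [G.sum_adj_swap]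
  rw [← sum_add_distrib]
  refine sum_congr rfl fun i _ => ?_
  rw [← sum_add_distrib]
  refine sum_congr rfl fun j _ => ?_
  rw [show s(j, i) = s(i, j) from Sym2.eq_swap]
  split_ifs <;> ring

lemma sum_glap_mulVec (z : Fin n → ℝ) : ∑ i, (glap G w *ᵥ z) i = 0 := by
  have hone : glap G w *ᵥ 1 = 0 := by ext i; simp [glap_mulVec]
  rw [← one_dotProduct, dotProduct_mulVec, ← mulVec_transpose, glap_transpose, hone,
    zero_dotProduct]

variable {G w}

lemma dotProduct_glap_mulVec_nonneg (hw : ∀ e ∈ G.edgeSet, 0 ≤ w e) (x : Fin n → ℝ) :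
    0 ≤ x ⬝ᵥ (glap G w *ᵥ x) := by
  have h := two_mul_dotProduct_glap_mulVec G w x
  have : 0 ≤ ∑ i, ∑ j, if G.Adj i j then w s(i, j) * (x i - x j) ^ 2 else 0 :=
    sum_nonneg fun i _ => sum_nonneg fun j _ => by
      split_ifs with hij
      exacts [mul_nonneg (hw _ hij) (sq_nonneg _), le_rfl]
  linarith

variable (hG : G.Connected) (hw : ∀ e ∈ G.edgeSet, 0 < w e)
include hG hw

lemma eq_of_glap_mulVec_eq_zero {x : Fin n → ℝ} (hx : glap G w *ᵥ x = 0) (i j : Fin n) :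
    x i = x j := by
  have hterm : ∀ i j, 0 ≤ if G.Adj i j then w s(i, j) * (x i - x j) ^ 2 else 0 := fun i j => by
    split_ifs with hij
    exacts [mul_nonneg (hw _ hij).le (sq_nonneg _), le_rfl]
  have hsum := two_mul_dotProduct_glap_mulVec G w x
  rw [hx, dotProduct_zero, mul_zero, eq_comm,
    sum_eq_zero_iff_of_nonneg fun i _ => sum_nonneg fun j _ => hterm i j] at hsum
  have hadj : ∀ u v, G.Adj u v → x u = x v := fun u v huv => by
    have huv0 := (sum_eq_zero_iff_of_nonneg fun j _ => hterm u j).mp (hsum u (mem_univ u)) v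
      (mem_univ v)
    rw [if_pos huv, mul_eq_zero, or_iff_right (hw _ huv).ne', sq_eq_zero_iff, sub_eq_zero]
      at huv0
    exact huv0
  obtain ⟨p⟩ := hG.preconnected i j
  induction p with
  | nil => rfl
  | cons h _ ih => exact (hadj _ _ h).trans ih

lemma ker_glap : LinearMap.ker (glap G w).mulVecLin = ℝ ∙ 1 := by
  ext x
  rw [LinearMap.mem_ker, mulVecLin_apply, Submodule.mem_span_singleton]
  constructor
  · intro hx
    obtain ⟨v⟩ := hG.nonempty
    exact ⟨x v, funext fun i => by simp [eq_of_glap_mulVec_eq_zero hG hw hx i v]⟩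
  · rintro ⟨c, rfl⟩
    ext i
    simp [glap_mulVec]

lemma rank_glap : (glap G w).rank = n - 1 := by
  have : Nonempty (Fin n) := hG.nonempty
  have h := LinearMap.finrank_range_add_finrank_ker (glap G w).mulVecLin
  rw [ker_glap hG hw, finrank_span_singleton one_ne_zero, Module.finrank_fin_fun] at h
  rw [rank]
  omega

lemma mem_range_glap_of_sum_eq_zero {x : Fin n → ℝ} (hx : ∑ i, x i = 0) :
    x ∈ LinearMap.range (glap G w).mulVecLin := by
  let sumLin : (Fin n → ℝ) →ₗ[ℝ] ℝ := ∑ i, LinearMap.proj i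
  have hsumLin (y : Fin n → ℝ) : sumLin y = ∑ i, y i := by simp [sumLin]
  have hle : LinearMap.range (glap G w).mulVecLin ≤ LinearMap.ker sumLin := by
    rintro _ ⟨z, rfl⟩
    rw [LinearMap.mem_ker, hsumLin, mulVecLin_apply, sum_glap_mulVec]
  have hne : LinearMap.ker sumLin ≠ ⊤ := by
    have : 0 < n := Fin.pos_iff_nonempty.mpr hG.nonempty
    intro htop
    have h1 : (1 : Fin n → ℝ) ∈ LinearMap.ker sumLin := htop ▸ Submodule.mem_top
    rw [LinearMap.mem_ker, hsumLin] at h1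
    simp [this.ne'] at h1
  have hrange := Submodule.eq_of_le_of_finrank_le hle <| by
    have := Submodule.finrank_lt hne
    rw [Module.finrank_fin_fun] at this
    rw [← rank, rank_glap hG hw]
    omega
  rw [hrange, LinearMap.mem_ker, hsumLin, hx]

lemma effR_nonneg_of_mul_mul_eq {Lp : Matrix (Fin n) (Fin n) ℝ}
    (h : glap G w * Lp * glap G w = glap G w) (e : Sym2 (Fin n)) : 0 ≤ effR Lp e := by
  induction e with
  | _ u v =>
    obtain ⟨z, hz⟩ := mem_range_glap_of_sum_eq_zero hG hw
      (x := Pi.single u 1 - Pi.single v 1) (by simp)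
    rw [effR_mk, ← hz, mulVecLin_apply,
      dotProduct_mulVec_mulVec_of_mul_mul_eq (glap_transpose G w) h]
    exact dotProduct_glap_mulVec_nonneg (fun e he => (hw e he).le) z

lemma trace_mul_glap_eq_sub_one {Lp : Matrix (Fin n) (Fin n) ℝ}
    (h : glap G w * Lp * glap G w = glap G w) : trace (Lp * glap G w) = n - 1 := by
  have : 0 < n := Fin.pos_iff_nonempty.mpr hG.nonempty
  rw [trace_eq_rank_of_isIdempotentElem (isIdempotentElem_mul_of_mul_mul_eq h),
    rank_mul_eq_of_mul_mul_eq h, rank_glap hG hw, Nat.cast_sub this, Nat.cast_one]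

end Laplacian

theorem stmt18_general {n : ℕ} (G : SimpleGraph (Fin n)) [DecidableRel G.Adj] (hG : G.Connected)
    (b a : Sym2 (Fin n) → ℝ)
    (hb : ∀ e ∈ G.edgeSet, 0 < b e)
    (Lp : Matrix (Fin n) (Fin n) ℝ)
    (h1 : glap G b * Lp * glap G b = glap G b)
    (hne : G.edgeFinset.Nonempty) :
    (Matrix.trace (Lp * glap G (fun e => a e * b e)) =
        ∑ e ∈ G.edgeFinset, (effR Lp e * b e) * a e) ∧
    (∑ e ∈ G.edgeFinset, effR Lp e * b e = (n : ℝ) - 1) ∧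
    (G.edgeFinset.inf' hne a * ((n : ℝ) - 1) ≤
        Matrix.trace (Lp * glap G (fun e => a e * b e)) ∧
      Matrix.trace (Lp * glap G (fun e => a e * b e)) ≤
        G.edgeFinset.sup' hne a * ((n : ℝ) - 1)) := by
  have htrace : trace (Lp * glap G fun e => a e * b e) =
      ∑ e ∈ G.edgeFinset, effR Lp e * b e * a e := by
    rw [trace_mul_glap]
    exact sum_congr rfl fun e _ => by ring
  have hsum : ∑ e ∈ G.edgeFinset, effR Lp e * b e = n - 1 := by
    rw [← trace_mul_glap_eq_sub_one hG hb h1, trace_mul_glap]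
    exact sum_congr rfl fun e _ => mul_comm _ _
  have hν : ∀ e ∈ G.edgeFinset, 0 ≤ effR Lp e * b e := fun e he =>
    mul_nonneg (effR_nonneg_of_mul_mul_eq hG hb h1 e) (hb e (mem_edgeFinset.mp he)).le
  refine ⟨htrace, hsum, ?_, ?_⟩ <;> rw [htrace, ← hsum]
  · exact inf'_mul_sum_le_sum_mul hne a _ hν
  · exact sum_mul_le_sup'_mul_sum hne a _ hν

/-- Power-loss identity and bounds: with susceptances `b` and conductances `g = α·b`,
`Tr(L_b† L_g) = ∑_e ν_e α_e`, `∑_e ν_e = n - 1`, and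
`α_min (n-1) ≤ Tr(L_b† L_g) ≤ α_max (n-1)`. Here `Lp` is the Moore–Penrose
pseudoinverse of `L_b`, characterized by the four Penrose conditions. -/
theorem stmt18 {n : ℕ} (G : SimpleGraph (Fin n)) [DecidableRel G.Adj] (hG : G.Connected)
    (b a : Sym2 (Fin n) → ℝ)
    (hb : ∀ e ∈ G.edgeSet, 0 < b e) (ha : ∀ e ∈ G.edgeSet, 0 < a e)
    (Lp : Matrix (Fin n) (Fin n) ℝ)
    (h1 : glap G b * Lp * glap G b = glap G b)
    (h2 : Lp * glap G b * Lp = Lp)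
    (h3 : (glap G b * Lp)ᵀ = glap G b * Lp)
    (h4 : (Lp * glap G b)ᵀ = Lp * glap G b)
    (hne : G.edgeFinset.Nonempty) :
    (Matrix.trace (Lp * glap G (fun e => a e * b e)) =
        ∑ e ∈ G.edgeFinset, (effR Lp e * b e) * a e) ∧
    (∑ e ∈ G.edgeFinset, effR Lp e * b e = (n : ℝ) - 1) ∧
    (G.edgeFinset.inf' hne a * ((n : ℝ) - 1) ≤
        Matrix.trace (Lp * glap G (fun e => a e * b e)) ∧
      Matrix.trace (Lp * glap G (fun e => a e * b e)) ≤
        G.edgeFinset.sup' hne a * ((n : ℝ) - 1)) :=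
  stmt18_general G hG b a hb Lp h1 hne
end
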